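/- Let n be a positive integer, let N₁ = R(n,n) and N₂ = 2^{C(N₁,2)}·(n+1). Then every interfered K^1_{N₁,N₂} contains K^1_{n,n} as a pivot-minor. -/

import Mathlib

open SimpleGraph

/-! ### Basic operations: local complementation, pivoting, vertex-minors -/

/-- Local complementation at a vertex `v`: the adjacency between each pair of
neighbours of `v` is toggled. -/
def localComp {V : Type*} (G : SimpleGraph V) (v : V) : SimpleGraph V where
  Adj a b := (G.Adj a b ∧ ¬(G.Adj v a ∧ G.Adj v b)) ∨
    (a ≠ b ∧ ¬ G.Adj a b ∧ G.Adj v a ∧ G.Adj v b)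
  symm := by
    refine ⟨?_⟩
    rintro a b (⟨h1, h2⟩ | ⟨h1, h2, h3, h4⟩)
    · exact Or.inl ⟨h1.symm, fun hc => h2 ⟨hc.2, hc.1⟩⟩
    · exact Or.inr ⟨h1.symm, fun hc => h2 hc.symm, h4, h3⟩
  loopless := by
    refine ⟨?_⟩
    rintro a (⟨h1, _⟩ | ⟨h1, _⟩)
    · exact G.irrefl h1
    · exact h1 rfl

/-- Pivoting an edge `uv`: `G ∧ uv = G * u * v * u`. -/
def pivotG {V : Type*} (G : SimpleGraph V) (u v : V) : SimpleGraph V :=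
  localComp (localComp (localComp G u) v) u

/-- Finite simple graphs, concretely represented on `Fin n`. -/
abbrev FinGraph := Σ n : ℕ, SimpleGraph (Fin n)

/-- One step in the construction of a vertex-minor: pass to an isomorphic copy,
perform a local complementation, or delete a vertex. -/
def VMStep (G H : FinGraph) : Prop :=
  Nonempty (G.2 ≃g H.2) ∨
  (∃ v : Fin G.1, Nonempty ((localComp G.2 v) ≃g H.2)) ∨
  (∃ v : Fin G.1, Nonempty ((G.2.induce {u | u ≠ v}) ≃g H.2))

/-- One step in the construction of a pivot-minor: pass to an isomorphic copy,
pivot an edge, or delete a vertex. -/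
def PMStep (G H : FinGraph) : Prop :=
  Nonempty (G.2 ≃g H.2) ∨
  (∃ u v : Fin G.1, G.2.Adj u v ∧ Nonempty ((pivotG G.2 u v) ≃g H.2)) ∨
  (∃ v : Fin G.1, Nonempty ((G.2.induce {u | u ≠ v}) ≃g H.2))

/-- `H` is a vertex-minor of `G` (both given concretely on `Fin _`). -/
def IsVertexMinorFG (H G : FinGraph) : Prop := Relation.ReflTransGen VMStep G H

/-- `H` is a pivot-minor of `G` (both given concretely on `Fin _`). -/
def IsPivotMinorFG (H G : FinGraph) : Prop := Relation.ReflTransGen PMStep G H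

/-- A finite graph represented concretely on `Fin (Nat.card V)`. -/
noncomputable def toFinGraph {V : Type*} [Finite V] (G : SimpleGraph V) : FinGraph :=
  ⟨Nat.card V, G.comap (Finite.equivFin V).symm⟩

/-- `H` is a vertex-minor of `G`. -/
def HasVertexMinor {V W : Type*} [Finite V] [Finite W]
    (G : SimpleGraph V) (H : SimpleGraph W) : Prop :=
  IsVertexMinorFG (toFinGraph H) (toFinGraph G)

/-- `H` is a pivot-minor of `G`. -/
def HasPivotMinor {V W : Type*} [Finite V] [Finite W]
    (G : SimpleGraph V) (H : SimpleGraph W) : Prop :=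
  IsPivotMinorFG (toFinGraph H) (toFinGraph G)

/-- A class of finite graphs closed under isomorphism, local complementation and
vertex deletion. -/
def VertexMinorClosed (𝒢 : Set FinGraph) : Prop :=
  (∀ G ∈ 𝒢, ∀ H : FinGraph, Nonempty (G.2 ≃g H.2) → H ∈ 𝒢) ∧
  (∀ G ∈ 𝒢, ∀ v : Fin G.1, (⟨G.1, localComp G.2 v⟩ : FinGraph) ∈ 𝒢) ∧
  (∀ G ∈ 𝒢, ∀ v : Fin G.1, toFinGraph (G.2.induce {u | u ≠ v}) ∈ 𝒢)

/-- A class of finite graphs closed under isomorphism, pivoting and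
vertex deletion. -/
def PivotMinorClosed (𝒢 : Set FinGraph) : Prop :=
  (∀ G ∈ 𝒢, ∀ H : FinGraph, Nonempty (G.2 ≃g H.2) → H ∈ 𝒢) ∧
  (∀ G ∈ 𝒢, ∀ u v : Fin G.1, G.2.Adj u v → (⟨G.1, pivotG G.2 u v⟩ : FinGraph) ∈ 𝒢) ∧
  (∀ G ∈ 𝒢, ∀ v : Fin G.1, toFinGraph (G.2.induce {u | u ≠ v}) ∈ 𝒢)

/-! ### Chromatic data -/

/-- The chromatic number, as a natural number (graphs here are finite). -/
noncomputable def chi {V : Type*} (G : SimpleGraph V) : ℕ := G.chromaticNumber.toNat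

/-- The ball of radius `ρ` around `v`: all vertices at distance at most `ρ` from `v`. -/
def ballSet {V : Type*} (G : SimpleGraph V) (v : V) (ρ : ℕ) : Set V :=
  {u | ∃ p : G.Walk v u, p.length ≤ ρ}

/-- `χ^{(ρ)}(G)`: the largest chromatic number of a `ρ`-ball of `G`. -/
noncomputable def chiBall {V : Type*} (G : SimpleGraph V) (ρ : ℕ) : ℕ :=
  ⨆ v : V, chi (G.induce (ballSet G v ρ))

/-- The distance from `u` to `v` is at least `n` (in particular, this holds
vacuously for unreachable pairs). -/
def distGE {V : Type*} (G : SimpleGraph V) (u v : V) (n : ℕ) : Prop :=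
  ∀ p : G.Walk u v, n ≤ p.length

/-- A stable (independent) set of vertices. -/
def IsStableSet {V : Type*} (G : SimpleGraph V) (A : Set V) : Prop :=
  ∀ a ∈ A, ∀ b ∈ A, ¬ G.Adj a b

/-- `A` covers `B`: every vertex of `B` has a neighbour in `A`. -/
def Covers {V : Type*} (G : SimpleGraph V) (A B : Set V) : Prop :=
  ∀ b ∈ B, ∃ a ∈ A, G.Adj a b

/-- `A` and `B` are anti-complete: there are no edges between them. -/
def AntiComplete {V : Type*} (G : SimpleGraph V) (A B : Set V) : Prop :=
  ∀ a ∈ A, ∀ b ∈ B, ¬ G.Adj a b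

/-- An induced path of `G`, given as a walk: it is a path, and the only edges of `G`
between its vertices are the edges of the path. -/
def IsInducedPath {V : Type*} (G : SimpleGraph V) {a b : V} (p : G.Walk a b) : Prop :=
  p.IsPath ∧ ∀ x ∈ p.support, ∀ y ∈ p.support, G.Adj x y → p.toSubgraph.Adj x y
/-! ### Big cliques and bloated trees -/

/-- A big clique: a maximal clique (w.r.t. vertex inclusion) of size at least 3. -/
def IsBigClique {V : Type*} (G : SimpleGraph V) (s : Finset V) : Prop :=
  G.IsClique ↑s ∧ 3 ≤ s.card ∧ ∀ t : Finset V, G.IsClique ↑t → s ⊆ t → t = s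

/-- Two vertices are related when they lie in a common big clique. -/
def bigCliqueRel {V : Type*} (G : SimpleGraph V) (u v : V) : Prop :=
  u = v ∨ ∃ s : Finset V, IsBigClique G s ∧ u ∈ s ∧ v ∈ s

/-- The graph obtained by contracting every big clique to a single vertex. -/
def contractBigCliques {V : Type*} (G : SimpleGraph V) :
    SimpleGraph (Quot (bigCliqueRel G)) where
  Adj a b := a ≠ b ∧ ∃ u v, G.Adj u v ∧ Quot.mk _ u = a ∧ Quot.mk _ v = b
  symm := by
    refine ⟨?_⟩
    rintro a b ⟨hne, u, v, h, hu, hv⟩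
    exact ⟨hne.symm, v, u, h.symm, hv, hu⟩
  loopless := ⟨fun a h => h.1 rfl⟩

/-- A bloated tree: every edge is in at most one big clique, vertices of a big
`k`-clique have degree at most `k`, and contracting all big cliques yields a tree. -/
def IsBloatedTree {V : Type*} (T : SimpleGraph V) : Prop :=
  (∀ u v, T.Adj u v → ∀ s t : Finset V, IsBigClique T s → IsBigClique T t →
    u ∈ s → v ∈ s → u ∈ t → v ∈ t → s = t) ∧
  (∀ s : Finset V, IsBigClique T s → ∀ v ∈ s, (T.neighborSet v).ncard ≤ s.card) ∧
  (contractBigCliques T).IsTree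

/-- A leaf: a vertex of degree at most 1. -/
def IsLeaf {V : Type*} (G : SimpleGraph V) (v : V) : Prop :=
  (G.neighborSet v).ncard ≤ 1

/-- A branching vertex of a bloated tree: a vertex of degree at least 3 that is
not contained in a triangle. -/
def IsBranching {V : Type*} (G : SimpleGraph V) (v : V) : Prop :=
  3 ≤ (G.neighborSet v).ncard ∧ ¬ ∃ a b, G.Adj v a ∧ G.Adj v b ∧ G.Adj a b

/-! ### Dangling paths and contractions -/

/-- The path `p` dangles from `X`: the set of vertices outside `p` with a
neighbour on `p` is exactly `X`. -/
def DanglesFrom {V : Type*} (G : SimpleGraph V) {a b : V} (p : G.Walk a b)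
    (X : Set V) : Prop :=
  {v | v ∉ p.support ∧ ∃ u ∈ p.support, G.Adj v u} = X

/-- The path `p` dangles oddly from `X`: moreover every vertex of `X` has an odd
number of neighbours on `p`. -/
def DanglesOddly {V : Type*} (G : SimpleGraph V) {a b : V} (p : G.Walk a b)
    (X : Set V) : Prop :=
  DanglesFrom G p X ∧ ∀ x ∈ X, Odd ({u | u ∈ p.support ∧ G.Adj x u}.ncard)

/-- Contract the set `S` to the single vertex `a₀` (for `a₀ ∈ S` with `G[S]`
connected this is contraction of all edges inside `S`). -/
def contractSet {V : Type*} (G : SimpleGraph V) (S : Set V) (a₀ : V) :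
    SimpleGraph {w : V // w ∉ S ∨ w = a₀} where
  Adj u v := u ≠ v ∧
    ((u.1 ∉ S ∧ v.1 ∉ S ∧ G.Adj u.1 v.1) ∨
     (u.1 = a₀ ∧ v.1 ∉ S ∧ ∃ s ∈ S, G.Adj s v.1) ∨
     (v.1 = a₀ ∧ u.1 ∉ S ∧ ∃ s ∈ S, G.Adj u.1 s))
  symm := by
    refine ⟨?_⟩
    rintro u v ⟨hne, h⟩
    refine ⟨hne.symm, ?_⟩
    rcases h with ⟨h1, h2, h3⟩ | ⟨h1, h2, s, hs, hadj⟩ | ⟨h1, h2, s, hs, hadj⟩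
    · exact Or.inl ⟨h2, h1, h3.symm⟩
    · exact Or.inr (Or.inr ⟨h1, h2, s, hs, hadj.symm⟩)
    · exact Or.inr (Or.inl ⟨h1, h2, s, hs, hadj.symm⟩)
  loopless := ⟨fun u h => h.1 rfl⟩

/-! ### Ramsey numbers -/

/-- Every graph on `Fin N` contains a clique of size `n` or a stable set of size `m`. -/
def RamseyProp (N n m : ℕ) : Prop :=
  ∀ G : SimpleGraph (Fin N),
    (∃ s : Finset (Fin N), G.IsNClique n s) ∨ (∃ s : Finset (Fin N), Gᶜ.IsNClique m s)

/-- The Ramsey number `R(n,m)`: the least `N` such that every graph on at least `N`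
vertices contains a clique of size `n` or a stable set of size `m`. -/
noncomputable def ramsey (n m : ℕ) : ℕ := sInf {N | ∀ M, N ≤ M → RamseyProp M n m}

/-! ### Subdivided complete bipartite graphs and interfered versions -/

/-- The vertex set of (an interfered) `K¹_{n,m}`: the `x_i`, the `y_j`, and the
subdivision vertices `z_{i,j}`. -/
abbrev IVert (n m : ℕ) := Fin n ⊕ Fin m ⊕ Fin n × Fin m

/-- `K¹_{n,m}`: the complete bipartite graph `K_{n,m}` with every edge subdivided
exactly once. -/
def KOneBip (n m : ℕ) : SimpleGraph (IVert n m) :=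
  SimpleGraph.fromRel (fun a b => ∃ i j,
    (a = Sum.inl i ∧ b = Sum.inr (Sum.inr (i, j))) ∨
    (a = Sum.inr (Sum.inl j) ∧ b = Sum.inr (Sum.inr (i, j))))

/-- The pairs that may be adjacent in an interfered `K¹_{n,m}`. -/
def InterferedAllowed (n m : ℕ) (a b : IVert n m) : Prop :=
  (∃ i j, a = Sum.inl i ∧ b = Sum.inr (Sum.inr (i, j))) ∨
  (∃ i j, a = Sum.inr (Sum.inl j) ∧ b = Sum.inr (Sum.inr (i, j))) ∨
  (∃ (k i : Fin n) (j : Fin m), k < i ∧ a = Sum.inl k ∧ b = Sum.inr (Sum.inr (i, j)))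

/-- An interfered `K¹_{n,m}`: all edges `x_i z_{i,j}` and `z_{i,j} y_j` are present,
and all other edges are of the form `x_k z_{i,j}` with `k < i`. -/
def IsInterfered (n m : ℕ) (G : SimpleGraph (IVert n m)) : Prop :=
  (∀ i j, G.Adj (Sum.inl i) (Sum.inr (Sum.inr (i, j)))) ∧
  (∀ i j, G.Adj (Sum.inr (Sum.inl j)) (Sum.inr (Sum.inr (i, j)))) ∧
  (∀ a b, G.Adj a b → InterferedAllowed n m a b ∨ InterferedAllowed n m b a)
/-! ### Long covers -/

/-- A long cover `(L⁰, L¹, L², L³)` of a set `C`. -/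
def IsLongCover {V : Type*} (G : SimpleGraph V) (L : Fin 4 → Set V) (C : Set V) : Prop :=
  (∀ i j : Fin 4, i ≠ j → Disjoint (L i) (L j)) ∧
  (∀ i : Fin 4, Disjoint (L i) C) ∧
  (G.induce (L 0)).Connected ∧
  Covers G (L 0) (L 1) ∧ Covers G (L 1) (L 2) ∧ Covers G (L 2) (L 3) ∧
  Covers G (L 3) C ∧
  AntiComplete G C (L 0) ∧ AntiComplete G C (L 1) ∧ AntiComplete G C (L 2) ∧
  AntiComplete G (L 0) (L 2) ∧ AntiComplete G (L 0) (L 3) ∧ AntiComplete G (L 1) (L 3)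

/-- A long `q`-cover of a set `C`. -/
def IsLongQCover {V : Type*} (G : SimpleGraph V) {q : ℕ}
    (ℒ : Fin q → Fin 4 → Set V) (C : Set V) : Prop :=
  (∀ i, IsLongCover G (ℒ i) C) ∧
  (∀ i j, i ≠ j →
    Disjoint (ℒ i 0 ∪ ℒ i 1 ∪ ℒ i 2 ∪ ℒ i 3) (ℒ j 0 ∪ ℒ j 1 ∪ ℒ j 2 ∪ ℒ j 3)) ∧
  (∀ i j, i < j →
    AntiComplete G (ℒ j 0 ∪ ℒ j 1 ∪ ℒ j 2) (ℒ i 0 ∪ ℒ i 1 ∪ ℒ i 2 ∪ ℒ i 3))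

/-! ### Multicovers -/

/-- A multicover `(N_x : x ∈ X)` of a set `C`, where `X` is presented as an
injective tuple `x : Fin m → V` (whose ordering is the total order on `X`). -/
def IsMulticover {V : Type*} (G : SimpleGraph V) {m : ℕ}
    (x : Fin m → V) (N : Fin m → Set V) (C : Set V) : Prop :=
  Function.Injective x ∧
  (∀ i, N i ⊆ G.neighborSet (x i)) ∧
  (∀ i, x i ∉ C) ∧
  (∀ i j, x i ∉ N j) ∧
  (∀ i, Disjoint (N i) C) ∧
  (∀ i j, i ≠ j → Disjoint (N i) (N j)) ∧
  (∀ i j, ¬ G.Adj (x i) (x j)) ∧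
  (∀ i, ∀ u ∈ C, ¬ G.Adj (x i) u) ∧
  (∀ i, ∀ u ∈ C, ∃ w ∈ N i, G.Adj w u) ∧
  (∀ i j, i < j → ∀ u ∈ N i, ¬ G.Adj (x j) u)

/-- A pure multicover: no `x ∈ X` has a neighbour in `N_y` for `y ≠ x`. -/
def IsPureMC {V : Type*} (G : SimpleGraph V) {m : ℕ}
    (x : Fin m → V) (N : Fin m → Set V) : Prop :=
  ∀ i j, i ≠ j → ∀ u ∈ N i, ¬ G.Adj (x j) u

/-- An impure multicover: for `x ≺ y`, `x` is complete to `N_y`. -/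
def IsImpureMC {V : Type*} (G : SimpleGraph V) {m : ℕ}
    (x : Fin m → V) (N : Fin m → Set V) : Prop :=
  ∀ i j, i < j → ∀ u ∈ N j, G.Adj (x i) u

/-! By pigeonhole, `n + 1` columns of an interfered `K¹_{N₁,N₂}` carry the same interference
pattern (which `x_k` with `k < i` see `z_{i,j}`), and Ramsey's theorem on the rows then yields `n`
rows on which there is either no interference at all, leaving an induced `K¹_{n,n}`, or all of it:
`x_k z_{i,j}` is an edge for every `k ≤ i`. In the second case the vertices `z_{i,j}` of the extra
column serve as stubs `s_i`, adjacent to the `x_k` with `k ≤ i`, and pivoting `x_i s_i` for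
`i = n - 1, …, 0` clears the interference one row at a time. -/

@[simp] theorem localComp_adj {V : Type*} (G : SimpleGraph V) (v a b : V) :
    (localComp G v).Adj a b ↔ (G.Adj a b ∧ ¬(G.Adj v a ∧ G.Adj v b)) ∨
      (a ≠ b ∧ ¬ G.Adj a b ∧ G.Adj v a ∧ G.Adj v b) := Iff.rfl

theorem localComp_comap {V W : Type*} (e : V ≃ W) (G : SimpleGraph W) (w : W) :
    (localComp G w).comap e = localComp (G.comap e) (e.symm w) := by
  ext a b
  simp

namespace HasPivotMinor

variable {U V W : Type*} [Finite U] [Finite V] [Finite W]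

theorem trans {G : SimpleGraph U} {H : SimpleGraph V} {K : SimpleGraph W}
    (hGH : HasPivotMinor G H) (hHK : HasPivotMinor H K) : HasPivotMinor G K :=
  Relation.ReflTransGen.trans hGH hHK

theorem of_iso {G : SimpleGraph V} {H : SimpleGraph W} (e : G ≃g H) : HasPivotMinor G H :=
  .single <| Or.inl ⟨((Iso.comap _ G).trans e).trans (Iso.comap _ H).symm⟩

theorem pivot {G : SimpleGraph V} {u v : V} (h : G.Adj u v) :
    HasPivotMinor G (pivotG G u v) := by
  set e := (Finite.equivFin V).symm
  refine .single <| Or.inr <| Or.inl ⟨e.symm u, e.symm v, by simpa [toFinGraph, e] using h, ?_⟩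
  have : (pivotG G u v).comap e = pivotG (G.comap e) (e.symm u) (e.symm v) := by
    simp only [pivotG, localComp_comap]
  exact ⟨this ▸ Iso.refl⟩

theorem deleteVertex (G : SimpleGraph V) (v : V) :
    HasPivotMinor G (G.induce {u | u ≠ v}) := by
  set e := (Finite.equivFin V).symm
  refine .single <| Or.inr <| Or.inr ⟨e.symm v, ⟨?_⟩⟩
  exact (⟨e.subtypeEquiv fun a => e.eq_symm_apply.not, Iff.rfl⟩ :
    _ ≃g G.induce {u | u ≠ v}).trans (Iso.comap _ _).symm

theorem of_embedding {G : SimpleGraph V} {H : SimpleGraph W} (f : H ↪g G) :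
    HasPivotMinor G H := by
  induction h : Nat.card V using Nat.strong_induction_on generalizing V with
  | _ N ih =>
    by_cases hf : Function.Surjective f
    · exact of_iso (⟨Equiv.ofBijective f ⟨f.injective, hf⟩, f.map_rel_iff⟩ : H ≃g G).symm
    obtain ⟨v, hv⟩ := not_forall.mp hf
    let f' : H ↪g G.induce {u | u ≠ v} :=
      ⟨⟨fun w => ⟨f w, fun h => hv ⟨w, h⟩⟩, fun a b hab => f.injective congr($hab.1)⟩,
        f.map_rel_iff⟩
    have hcard : Nat.card {u // u ≠ v} < N := h ▸ Finite.card_subtype_lt (x := v) (by simp)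
    exact (deleteVertex G v).trans (ih _ hcard f' rfl)

end HasPivotMinor

namespace RamseyProp

variable {N n m : ℕ}

theorem symm (h : RamseyProp N n m) : RamseyProp N m n := fun G => by
  simpa only [compl_compl, or_comm] using h Gᶜ

theorem exists_subset (h : RamseyProp N n m) {M : ℕ} (G : SimpleGraph (Fin M))
    (t : Finset (Fin M)) (ht : N ≤ t.card) :
    ∃ s ⊆ t, G.IsNClique n s ∨ Gᶜ.IsNClique m s := by
  set f := t.orderEmbOfCardLe ht
  have hsub (s : Finset (Fin N)) : s.map f.toEmbedding ⊆ t := fun x hx => by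
    obtain ⟨a, -, rfl⟩ := Finset.mem_map.mp hx
    exact t.orderEmbOfCardLe_mem ht a
  have hcompl : (G.comap f)ᶜ = Gᶜ.comap f := by
    ext a b
    simp [f.injective.ne_iff]
  rcases h (G.comap f) with ⟨s, hs⟩ | ⟨s, hs⟩
  · exact ⟨_, hsub s, Or.inl (hs.map.mono (map_comap_le _ _))⟩
  · rw [hcompl] at hs
    exact ⟨_, hsub s, Or.inr (hs.map.mono (map_comap_le _ _))⟩

theorem mono (h : RamseyProp N n m) {M : ℕ} (hNM : N ≤ M) : RamseyProp M n m := fun G => by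
  obtain ⟨s, -, hs | hs⟩ := h.exists_subset G Finset.univ (by simpa using hNM)
  exacts [Or.inl ⟨s, hs⟩, Or.inr ⟨s, hs⟩]

theorem exists_isNClique_succ_of_le_degree (h : RamseyProp N n m) {M : ℕ} (G : SimpleGraph (Fin M))
    [DecidableRel G.Adj] (v : Fin M) (hv : N ≤ G.degree v) :
    (∃ s, G.IsNClique (n + 1) s) ∨ ∃ s, Gᶜ.IsNClique m s := by
  classical
  obtain ⟨s, hst, hs | hs⟩ := h.exists_subset G _ hv
  · refine Or.inl ⟨insert v s, hs.insert fun w hw => ?_⟩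
    simpa using hst hw
  · exact Or.inr ⟨s, hs⟩

theorem succ_succ {N₁ N₂ : ℕ} (h₁ : RamseyProp N₁ n (m + 1)) (h₂ : RamseyProp N₂ (n + 1) m) :
    RamseyProp (N₁ + N₂ + 1) (n + 1) (m + 1) := fun G => by
  classical
  have hdeg := G.degree_compl (v := 0)
  simp only [Fintype.card_fin] at hdeg
  by_cases hv : N₁ ≤ G.degree 0
  · exact h₁.exists_isNClique_succ_of_le_degree G 0 hv
  · simpa only [compl_compl, or_comm] using
      h₂.symm.exists_isNClique_succ_of_le_degree Gᶜ 0 (by omega)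

theorem exists_orderEmbedding_homogeneous {N n : ℕ} (h : RamseyProp N n n)
    (P : Fin N → Fin N → Prop) :
    ∃ e : Fin n ↪o Fin N, (∀ a b, a < b → P (e a) (e b)) ∨ ∀ a b, a < b → ¬ P (e a) (e b) := by
  let H := SimpleGraph.fromRel fun k i : Fin N => k < i ∧ P k i
  have hH {k i : Fin N} (hki : k < i) : H.Adj k i ↔ P k i := by
    simp [H, hki, hki.ne, hki.not_gt]
  rcases h H with ⟨s, hs⟩ | ⟨s, hs⟩ <;> refine ⟨s.orderEmbOfFin hs.card_eq, ?_⟩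
  · refine Or.inl fun a b hab => (hH (by simpa using hab)).mp ?_
    exact hs.isClique (by simp) (by simp) (by simpa using hab.ne)
  · refine Or.inr fun a b hab => (hH (by simpa using hab)).not.mp ?_
    exact (hs.isClique (by simp) (by simp) (by simpa using hab.ne)).2

end RamseyProp

theorem exists_ramseyProp : ∀ n m : ℕ, ∃ N, RamseyProp N n m
  | 0, _ => ⟨0, fun _ => Or.inl ⟨∅, by simp⟩⟩
  | _ + 1, 0 => ⟨0, fun _ => Or.inr ⟨∅, by simp⟩⟩
  | n + 1, m + 1 =>
    have ⟨_, h₁⟩ := exists_ramseyProp n (m + 1)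
    have ⟨_, h₂⟩ := exists_ramseyProp (n + 1) m
    ⟨_, h₁.succ_succ h₂⟩

theorem ramseyProp_ramsey (n m : ℕ) : RamseyProp (ramsey n m) n m := by
  obtain ⟨N, hN⟩ := exists_ramseyProp n m
  exact Nat.sInf_mem (s := {N | ∀ M, N ≤ M → RamseyProp M n m}) ⟨N, fun _ => hN.mono⟩ _ le_rfl

/-- Pigeonhole over the `2 ^ C(N, 2)` patterns of adjacency above the diagonal. -/
theorem exists_columns_agree {N M n : ℕ} (P : Fin N → Fin N → Fin M → Prop)
    (hM : 2 ^ N.choose 2 * n < M) :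
    ∃ c : Fin (n + 1) ↪ Fin M, ∀ k i, k < i → ∀ t, (P k i (c t) ↔ P k i (c 0)) := by
  classical
  let pattern (j : Fin M) (x : {x : Fin N × Fin N // x.1 < x.2}) : Bool := P x.1.1 x.1.2 j
  obtain ⟨p, hp⟩ := Fintype.exists_lt_card_fiber_of_mul_lt_card pattern (by
    simpa [Fintype.card_subtype, Fintype.card_product_filter_lt] using hM)
  let c := (Finset.univ.filter (pattern · = p)).orderEmbOfCardLe hp
  have hc (t : Fin (n + 1)) : pattern (c t) = p := by
    simpa using Finset.orderEmbOfCardLe_mem _ hp t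
  refine ⟨c.toEmbedding, fun k i hki t => ?_⟩
  simpa [pattern] using congrFun ((hc t).trans (hc 0).symm) ⟨(k, i), hki⟩

section InterferedGraph

variable {n m : ℕ}

/-- The graph on the vertices of `K¹_{n,m}` with all edges `z_{i,j} y_j`, in which `x_k z_{i,j}`
is an edge exactly when `R k i j`. -/
def interferedGraph (R : Fin n → Fin n → Fin m → Prop) : SimpleGraph (IVert n m) :=
  SimpleGraph.fromRel fun
    | Sum.inl k, Sum.inr (Sum.inr (i, j)) => R k i j
    | Sum.inr (Sum.inl j'), Sum.inr (Sum.inr (_, j)) => j' = j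
    | _, _ => False

theorem kOneBip_eq_interferedGraph : KOneBip n m = interferedGraph fun k i _ => k = i := by
  ext a b
  rcases a with k | j | ⟨i, j⟩ <;> rcases b with k' | j' | ⟨i', j'⟩ <;>
    simp [KOneBip, interferedGraph, eq_comm]

theorem IsInterfered.eq_interferedGraph {G : SimpleGraph (IVert n m)} (hG : IsInterfered n m G) :
    G = interferedGraph fun k i j => G.Adj (.inl k) (.inr (.inr (i, j))) := by
  ext a b
  refine ⟨fun h => ?_, fun h => ?_⟩
  · rcases hG.2.2 a b h with (⟨i, j, rfl, rfl⟩ | ⟨i, j, rfl, rfl⟩ | ⟨k, i, j, -, rfl, rfl⟩) |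
      (⟨i, j, rfl, rfl⟩ | ⟨i, j, rfl, rfl⟩ | ⟨k, i, j, -, rfl, rfl⟩) <;>
      simp [interferedGraph, h, h.symm]
  · rcases a with k | j | ⟨i, j⟩ <;> rcases b with k' | j' | ⟨i', j'⟩ <;>
      simp [interferedGraph] at h
    exacts [h, h ▸ hG.2.1 _ _, h.symm, h ▸ (hG.2.1 _ _).symm]

def interferedGraphRestrict {n' m' : ℕ} (R : Fin n → Fin n → Fin m → Prop) (e : Fin n' ↪ Fin n)
    (c : Fin m' ↪ Fin m) :
    interferedGraph (fun k i j => R (e k) (e i) (c j)) ↪g interferedGraph R where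
  toFun := Sum.map e (Sum.map c (Prod.map e c))
  inj' := (e.injective.sumMap (c.injective.sumMap (e.injective.prodMap c.injective)))
  map_rel_iff' {a b} := by
    rcases a with k | j | ⟨i, j⟩ <;> rcases b with k' | j' | ⟨i', j'⟩ <;>
      simp [interferedGraph]

end InterferedGraph

namespace IsInterfered

variable {N M : ℕ} {G : SimpleGraph (IVert N M)}

theorem le_of_adj (hG : IsInterfered N M G) {k i : Fin N} {j : Fin M}
    (h : G.Adj (.inl k) (.inr (.inr (i, j)))) : k ≤ i := by
  rcases hG.2.2 _ _ h with h' | h' <;> simp [InterferedAllowed] at h'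
  exact h'.elim (fun h => h.ge) le_of_lt

theorem adj_iff_le (hG : IsInterfered N M G) {n : ℕ} (e : Fin n ↪o Fin N) {j : Fin M}
    (h : ∀ a b, a < b → G.Adj (.inl (e a)) (.inr (.inr (e b, j)))) (a b : Fin n) :
    G.Adj (.inl (e a)) (.inr (.inr (e b, j))) ↔ a ≤ b := by
  refine ⟨fun hab => e.le_iff_le.mp (hG.le_of_adj hab), fun hab => ?_⟩
  rcases hab.eq_or_lt with rfl | hab
  exacts [hG.1 _ _, h a b hab]

theorem adj_iff_eq (hG : IsInterfered N M G) {n : ℕ} (e : Fin n ↪o Fin N) {j : Fin M}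
    (h : ∀ a b, a < b → ¬ G.Adj (.inl (e a)) (.inr (.inr (e b, j)))) (a b : Fin n) :
    G.Adj (.inl (e a)) (.inr (.inr (e b, j))) ↔ a = b := by
  refine ⟨fun hab => ?_, fun hab => hab ▸ hG.1 _ _⟩
  exact (e.le_iff_le.mp (hG.le_of_adj hab)).eq_of_not_lt fun hlt => h a b hlt hab

theorem hasPivotMinor_interferedGraph (hG : IsInterfered N M G) {n m : ℕ} (e : Fin n ↪ Fin N)
    (c : Fin m ↪ Fin M) {R : Fin n → Fin n → Fin m → Prop}
    (hR : ∀ a b t, G.Adj (.inl (e a)) (.inr (.inr (e b, c t))) ↔ R a b t) :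
    HasPivotMinor G (interferedGraph R) := by
  have hRG : (fun a b t => G.Adj (.inl (e a)) (.inr (.inr (e b, c t)))) = R := by
    ext a b t
    exact hR a b t
  rw [hG.eq_interferedGraph, ← hRG]
  exact .of_embedding <|
    interferedGraphRestrict (fun k i j => G.Adj (.inl k) (.inr (.inr (i, j)))) e c

end IsInterfered

section Staircase

/-- The vertices `x_k`, `y_j`, `z_{i,j}` of `K¹_{n,n}`, together with a stub `s_i` for each
row `i < r`. -/
abbrev StairVert (n r : ℕ) := Fin n ⊕ Fin n ⊕ (Fin n × Fin n) ⊕ {i : Fin n // i.val < r}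

def staircase (n r : ℕ) : SimpleGraph (StairVert n r) :=
  SimpleGraph.fromRel fun
    | .inl k, .inr (.inr (.inl (i, _))) => k = i ∨ (k < i ∧ i.val < r)
    | .inr (.inl j'), .inr (.inr (.inl (_, j))) => j' = j
    | .inl k, .inr (.inr (.inr i)) => k ≤ i.1
    | _, _ => False

def kOneBipEmbStaircase (n : ℕ) : KOneBip n n ↪g staircase n 0 where
  toFun := Sum.map id (Sum.map id Sum.inl)
  inj' := Function.injective_id.sumMap (Function.injective_id.sumMap Sum.inl_injective)
  map_rel_iff' {a b} := by
    rw [kOneBip_eq_interferedGraph]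
    rcases a with k | j | ⟨i, j⟩ <;> rcases b with k' | j' | ⟨i', j'⟩ <;>
      simp [staircase, interferedGraph]

def staircaseEmbInterferedGraph (n : ℕ) :
    staircase n n ↪g interferedGraph (n := n) (m := n + 1) fun k i _ => k ≤ i where
  toFun := Sum.map id <| Sum.map Fin.castSucc <|
    Sum.elim (Prod.map id Fin.castSucc) fun i => (i.1, Fin.last n)
  inj' := Function.injective_id.sumMap <| (Fin.castSucc_injective n).sumMap <|
    (Function.injective_id.prodMap (Fin.castSucc_injective n)).sumElim
      (fun _ _ h => Subtype.ext (Prod.ext_iff.mp h).1)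
      fun _ _ h => Fin.castSucc_ne_last _ congr($h.2)
  map_rel_iff' {a b} := by
    rcases a with k | j | ⟨i, j⟩ | ⟨i, hi⟩ <;> rcases b with k' | j' | ⟨i', j'⟩ | ⟨i', hi'⟩ <;>
      simp [staircase, interferedGraph, le_iff_eq_or_lt]

variable {n r : ℕ}

def stub (hr : r < n) : StairVert n (r + 1) := .inr (.inr (.inr ⟨⟨r, hr⟩, r.lt_succ_self⟩))

def stairStep (hr : r < n) : StairVert n r → StairVert n (r + 1)
  | .inl k => if k.val = r then stub hr else .inl k
  | .inr (.inl j) => .inr (.inl j)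
  | .inr (.inr (.inl p)) => .inr (.inr (.inl p))
  | .inr (.inr (.inr i)) => .inr (.inr (.inr ⟨i.1, i.2.trans r.lt_succ_self⟩))

theorem stairStep_injective (hr : r < n) : Function.Injective (stairStep hr) := by
  intro a b hab
  rcases a with k | j | p | ⟨i, hi⟩ <;> rcases b with k' | j' | p' | ⟨i', hi'⟩ <;>
    simp only [stairStep, stub] at hab <;> (try split_ifs at hab) <;>
    simp_all [Fin.ext_iff] <;> omega

/-- Pivoting `x_r s_r` removes the edges `x_k z_{r,j}` with `k < r`, and then `s_r` plays the role
of `x_r`, while `x_r` is deleted. -/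
def staircasePivotEmb (hr : r < n) :
    staircase n r ↪g pivotG (staircase n (r + 1)) (.inl ⟨r, hr⟩) (stub hr) where
  toFun := stairStep hr
  inj' := stairStep_injective hr
  map_rel_iff' {a b} := by
    rcases a with k | j | ⟨i, j⟩ | ⟨i, hi⟩ <;> rcases b with k' | j' | ⟨i', j'⟩ | ⟨i', hi'⟩ <;>
      simp only [Function.Embedding.coeFn_mk, stairStep] <;> (try split_ifs) <;>
      simp only [pivotG, localComp_adj, staircase, stub, fromRel_adj, ne_eq,
        Sum.inl.injEq, Sum.inr.injEq, Prod.mk.injEq, Subtype.mk.injEq, Fin.ext_iff,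
        Fin.lt_def, Fin.le_def, not_true_eq_false, not_false_eq_true,
        true_and, and_true, false_and, and_false, false_or, or_false, not_and, not_or,
        reduceCtorEq, iff_false] <;>
      omega

theorem staircase_hasPivotMinor_kOneBip : ∀ r ≤ n, HasPivotMinor (staircase n r) (KOneBip n n)
  | 0, _ => .of_embedding (kOneBipEmbStaircase n)
  | r + 1, hr => ((HasPivotMinor.pivot (by simp [staircase, stub])).trans
      (.of_embedding (staircasePivotEmb hr))).trans
      (staircase_hasPivotMinor_kOneBip r (Nat.le_of_succ_le hr))

theorem interferedGraph_of_le_hasPivotMinor_kOneBip (n : ℕ) :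
    HasPivotMinor (interferedGraph (n := n) (m := n + 1) fun k i _ => k ≤ i) (KOneBip n n) :=
  (HasPivotMinor.of_embedding (staircaseEmbInterferedGraph n)).trans
    (staircase_hasPivotMinor_kOneBip n le_rfl)

end Staircase

theorem interfered_contains_kOneBip_as_pivotMinor_general (n : ℕ)
    (G : SimpleGraph (IVert (ramsey n n) (2 ^ ((ramsey n n).choose 2) * (n + 1))))
    (hG : IsInterfered (ramsey n n) (2 ^ ((ramsey n n).choose 2) * (n + 1)) G) :
    HasPivotMinor G (KOneBip n n) := by
  obtain ⟨c, hc⟩ := exists_columns_agree (n := n)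
    (fun k i j => G.Adj (.inl k) (.inr (.inr (i, j))))
    (Nat.mul_lt_mul_of_pos_left (Nat.lt_succ_self n) (Nat.two_pow_pos _))
  obtain ⟨e, hup | hdown⟩ := (ramseyProp_ramsey n n).exists_orderEmbedding_homogeneous
    fun k i => G.Adj (.inl k) (.inr (.inr (i, c 0)))
  · refine (hG.hasPivotMinor_interferedGraph e.toEmbedding c (R := fun a b _ => a ≤ b)
      fun a b t => ?_).trans (interferedGraph_of_le_hasPivotMinor_kOneBip n)
    exact hG.adj_iff_le e (fun a b hab => (hc _ _ (e.strictMono hab) t).mpr (hup a b hab)) a b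
  · rw [kOneBip_eq_interferedGraph]
    refine hG.hasPivotMinor_interferedGraph e.toEmbedding (Fin.castSuccEmb.trans c) fun a b t => ?_
    exact hG.adj_iff_eq e
      (fun a b hab => (hc _ _ (e.strictMono hab) _).not.mpr (hdown a b hab)) a b

/-- **Lemma 2.2.** With `N₁ = R(n,n)` and `N₂ = 2^{C(N₁,2)}·(n+1)`, every interfered
`K¹_{N₁,N₂}` contains `K¹_{n,n}` as a pivot-minor. -/
theorem interfered_contains_kOneBip_as_pivotMinor (n : ℕ) (hn : 0 < n)
    (G : SimpleGraph (IVert (ramsey n n) (2 ^ ((ramsey n n).choose 2) * (n + 1))))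
    (hG : IsInterfered (ramsey n n) (2 ^ ((ramsey n n).choose 2) * (n + 1)) G) :
    HasPivotMinor G (KOneBip n n) :=
  interfered_contains_kOneBip_as_pivotMinor_general n G hG
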